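/- Let D = diag(1, 1, 0, −1, −1, 0) and for k ∈ ℤ let s_k = {X ∈ sp(6,ℝ) : DX − XD = kX}. Then sp(6,ℝ) = s₋₂ ⊕ s₋₁ ⊕ s₀ ⊕ s₁ ⊕ s₂ with dim s_k = 3, 4, 7, 4, 3 for k = −2, −1, 0, 1, 2 respectively (in particular [s_p, s_q] ⊆ s_{p+q}, interpreted as 0 when |p+q| > 2), and the degree-zero subalgebra s₀ is isomorphic as a Lie algebra to the direct product gl(2,ℝ) × sl(2,ℝ). -/
import Mathlib


noncomputable section

open Module

/-- The matrix of the standard symplectic form on ℝ⁶. -/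
def J6 : Matrix (Fin 6) (Fin 6) ℝ :=
  !![0,0,0,1,0,0; 0,0,0,0,1,0; 0,0,0,0,0,1;
     -1,0,0,0,0,0; 0,-1,0,0,0,0; 0,0,-1,0,0,0]

/-- `sp(6,ℝ) = {X : Xᵀ J + J X = 0}`. -/
def sp6 : Set (Matrix (Fin 6) (Fin 6) ℝ) :=
  {X | X.transpose * J6 + J6 * X = 0}

/-- The grading element `D = diag(1,1,0,−1,−1,0)`. -/
def D6 : Matrix (Fin 6) (Fin 6) ℝ := Matrix.diagonal ![1, 1, 0, -1, -1, 0]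

/-- The graded piece `s_k = {X ∈ sp(6,ℝ) : DX − XD = kX}`. -/
def sLevel (k : ℤ) : Set (Matrix (Fin 6) (Fin 6) ℝ) :=
  {X | X ∈ sp6 ∧ D6 * X - X * D6 = (k : ℝ) • X}

/-- `gl(2,ℝ) × sl(2,ℝ)`, realized as the subset of pairs of 2×2 matrices whose second
component is trace-free. -/
def gl2sl2 : Set (Matrix (Fin 2) (Fin 2) ℝ × Matrix (Fin 2) (Fin 2) ℝ) :=
  {p | Matrix.trace p.2 = 0}

def deg : Fin 6 → ℤ := ![1,1,0,-1,-1,0]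

@[simp] lemma J6_00 : J6 0 0 = 0 := rfl
@[simp] lemma J6_01 : J6 0 1 = 0 := rfl
@[simp] lemma J6_02 : J6 0 2 = 0 := rfl
@[simp] lemma J6_03 : J6 0 3 = 1 := rfl
@[simp] lemma J6_04 : J6 0 4 = 0 := rfl
@[simp] lemma J6_05 : J6 0 5 = 0 := rfl
@[simp] lemma J6_10 : J6 1 0 = 0 := rfl
@[simp] lemma J6_11 : J6 1 1 = 0 := rfl
@[simp] lemma J6_12 : J6 1 2 = 0 := rfl
@[simp] lemma J6_13 : J6 1 3 = 0 := rfl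
@[simp] lemma J6_14 : J6 1 4 = 1 := rfl
@[simp] lemma J6_15 : J6 1 5 = 0 := rfl
@[simp] lemma J6_20 : J6 2 0 = 0 := rfl
@[simp] lemma J6_21 : J6 2 1 = 0 := rfl
@[simp] lemma J6_22 : J6 2 2 = 0 := rfl
@[simp] lemma J6_23 : J6 2 3 = 0 := rfl
@[simp] lemma J6_24 : J6 2 4 = 0 := rfl
@[simp] lemma J6_25 : J6 2 5 = 1 := rfl
@[simp] lemma J6_30 : J6 3 0 = -1 := rfl
@[simp] lemma J6_31 : J6 3 1 = 0 := rfl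
@[simp] lemma J6_32 : J6 3 2 = 0 := rfl
@[simp] lemma J6_33 : J6 3 3 = 0 := rfl
@[simp] lemma J6_34 : J6 3 4 = 0 := rfl
@[simp] lemma J6_35 : J6 3 5 = 0 := rfl
@[simp] lemma J6_40 : J6 4 0 = 0 := rfl
@[simp] lemma J6_41 : J6 4 1 = -1 := rfl
@[simp] lemma J6_42 : J6 4 2 = 0 := rfl
@[simp] lemma J6_43 : J6 4 3 = 0 := rfl
@[simp] lemma J6_44 : J6 4 4 = 0 := rfl
@[simp] lemma J6_45 : J6 4 5 = 0 := rfl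
@[simp] lemma J6_50 : J6 5 0 = 0 := rfl
@[simp] lemma J6_51 : J6 5 1 = 0 := rfl
@[simp] lemma J6_52 : J6 5 2 = -1 := rfl
@[simp] lemma J6_53 : J6 5 3 = 0 := rfl
@[simp] lemma J6_54 : J6 5 4 = 0 := rfl
@[simp] lemma J6_55 : J6 5 5 = 0 := rfl
@[simp] lemma deg_0 : deg 0 = 1 := rfl
@[simp] lemma deg_1 : deg 1 = 1 := rfl
@[simp] lemma deg_2 : deg 2 = 0 := rfl
@[simp] lemma deg_3 : deg 3 = -1 := rfl
@[simp] lemma deg_4 : deg 4 = -1 := rfl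
@[simp] lemma deg_5 : deg 5 = 0 := rfl
@[simp] lemma D6_00 : D6 0 0 = 1 := rfl
@[simp] lemma D6_01 : D6 0 1 = 0 := rfl
@[simp] lemma D6_02 : D6 0 2 = 0 := rfl
@[simp] lemma D6_03 : D6 0 3 = 0 := rfl
@[simp] lemma D6_04 : D6 0 4 = 0 := rfl
@[simp] lemma D6_05 : D6 0 5 = 0 := rfl
@[simp] lemma D6_10 : D6 1 0 = 0 := rfl
@[simp] lemma D6_11 : D6 1 1 = 1 := rfl
@[simp] lemma D6_12 : D6 1 2 = 0 := rfl
@[simp] lemma D6_13 : D6 1 3 = 0 := rfl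
@[simp] lemma D6_14 : D6 1 4 = 0 := rfl
@[simp] lemma D6_15 : D6 1 5 = 0 := rfl
@[simp] lemma D6_20 : D6 2 0 = 0 := rfl
@[simp] lemma D6_21 : D6 2 1 = 0 := rfl
@[simp] lemma D6_22 : D6 2 2 = 0 := rfl
@[simp] lemma D6_23 : D6 2 3 = 0 := rfl
@[simp] lemma D6_24 : D6 2 4 = 0 := rfl
@[simp] lemma D6_25 : D6 2 5 = 0 := rfl
@[simp] lemma D6_30 : D6 3 0 = 0 := rfl
@[simp] lemma D6_31 : D6 3 1 = 0 := rfl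
@[simp] lemma D6_32 : D6 3 2 = 0 := rfl
@[simp] lemma D6_33 : D6 3 3 = -1 := rfl
@[simp] lemma D6_34 : D6 3 4 = 0 := rfl
@[simp] lemma D6_35 : D6 3 5 = 0 := rfl
@[simp] lemma D6_40 : D6 4 0 = 0 := rfl
@[simp] lemma D6_41 : D6 4 1 = 0 := rfl
@[simp] lemma D6_42 : D6 4 2 = 0 := rfl
@[simp] lemma D6_43 : D6 4 3 = 0 := rfl
@[simp] lemma D6_44 : D6 4 4 = -1 := rfl
@[simp] lemma D6_45 : D6 4 5 = 0 := rfl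
@[simp] lemma D6_50 : D6 5 0 = 0 := rfl
@[simp] lemma D6_51 : D6 5 1 = 0 := rfl
@[simp] lemma D6_52 : D6 5 2 = 0 := rfl
@[simp] lemma D6_53 : D6 5 3 = 0 := rfl
@[simp] lemma D6_54 : D6 5 4 = 0 := rfl
@[simp] lemma D6_55 : D6 5 5 = 0 := rfl

lemma D6_eq : D6 = Matrix.diagonal (fun i => (deg i : ℝ)) := by
  ext i j
  fin_cases i <;> fin_cases j <;> simp [Matrix.diagonal]

lemma mem_sLevel_iff {k : ℤ} {X : Matrix (Fin 6) (Fin 6) ℝ} :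
    X ∈ sLevel k ↔ X ∈ sp6 ∧ ∀ i j, ((deg i : ℝ) - deg j) * X i j = (k : ℝ) * X i j := by
  unfold sLevel
  simp only [Set.mem_setOf_eq, D6_eq, and_congr_right_iff]
  intro _
  rw [← Matrix.ext_iff]
  constructor <;> intro h i j <;> have hh := h i j <;>
    simp only [Matrix.sub_apply, Matrix.diagonal_mul, Matrix.mul_diagonal,
      Matrix.smul_apply, smul_eq_mul] at hh ⊢ <;> ring_nf at hh ⊢ <;> linarith

lemma sLevel_entry_zero {k : ℤ} {X : Matrix (Fin 6) (Fin 6) ℝ} (h : X ∈ sLevel k)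
    {i j : Fin 6} (hne : deg i - deg j ≠ k) : X i j = 0 := by
  have h2 := (mem_sLevel_iff.mp h).2 i j
  by_contra hx
  apply hne
  have : ((deg i : ℝ) - deg j) = (k : ℝ) := mul_right_cancel₀ hx h2
  exact_mod_cast this


lemma sp6_iff {X : Matrix (Fin 6) (Fin 6) ℝ} :
    X ∈ sp6 ↔ (X 3 1 = X 4 0 ∧ X 3 2 = X 5 0 ∧ X 4 2 = X 5 1 ∧ X 0 4 = X 1 3 ∧ X 0 5 = X 2 3 ∧ X 1 5 = X 2 4 ∧ X 3 3 = -X 0 0 ∧ X 3 4 = -X 1 0 ∧ X 3 5 = -X 2 0 ∧ X 4 3 = -X 0 1 ∧ X 4 4 = -X 1 1 ∧ X 4 5 = -X 2 1 ∧ X 5 3 = -X 0 2 ∧ X 5 4 = -X 1 2 ∧ X 5 5 = -X 2 2) := by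
  constructor
  · intro h
    simp only [sp6, Set.mem_setOf_eq] at h
    have h03 := congrFun (congrFun h 0) 3
    have h04 := congrFun (congrFun h 0) 4
    have h05 := congrFun (congrFun h 0) 5
    have h10 := congrFun (congrFun h 1) 0
    have h13 := congrFun (congrFun h 1) 3
    have h14 := congrFun (congrFun h 1) 4
    have h15 := congrFun (congrFun h 1) 5
    have h20 := congrFun (congrFun h 2) 0
    have h21 := congrFun (congrFun h 2) 1
    have h23 := congrFun (congrFun h 2) 3
    have h24 := congrFun (congrFun h 2) 4
    have h25 := congrFun (congrFun h 2) 5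
    have h43 := congrFun (congrFun h 4) 3
    have h53 := congrFun (congrFun h 5) 3
    have h54 := congrFun (congrFun h 5) 4
    simp only [Matrix.add_apply, Matrix.mul_apply, Fin.sum_univ_six,
      Matrix.transpose_apply, Matrix.zero_apply, J6_00] at h03 h04 h05 h10 h13 h14 h15 h20 h21 h23 h24 h25 h43 h53 h54
    simp at h03 h04 h05 h10 h13 h14 h15 h20 h21 h23 h24 h25 h43 h53 h54
    refine ⟨by linarith, by linarith, by linarith, by linarith, by linarith, by linarith, by linarith, by linarith, by linarith, by linarith, by linarith, by linarith, by linarith, by linarith, by linarith⟩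
  · intro h
    obtain ⟨c1,c2,c3,b1,b2,b3,a1,a2,a3,a4,a5,a6,a7,a8,a9⟩ := h
    show _ = _
    ext i j
    simp only [Matrix.add_apply, Matrix.mul_apply, Fin.sum_univ_six,
      Matrix.transpose_apply, Matrix.zero_apply]
    fin_cases i <;> fin_cases j <;> simp <;> linarith

def proj (k : ℤ) (X : Matrix (Fin 6) (Fin 6) ℝ) : Matrix (Fin 6) (Fin 6) ℝ :=
  Matrix.of fun i j => if deg i - deg j = k then X i j else 0

@[simp] lemma proj_apply (k : ℤ) (X : Matrix (Fin 6) (Fin 6) ℝ) (i j : Fin 6) :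
    proj k X i j = if deg i - deg j = k then X i j else 0 := rfl

lemma proj_mem_sp6 {X : Matrix (Fin 6) (Fin 6) ℝ} (h : X ∈ sp6) (k : ℤ) :
    proj k X ∈ sp6 := by
  obtain ⟨c1,c2,c3,b1,b2,b3,a1,a2,a3,a4,a5,a6,a7,a8,a9⟩ := sp6_iff.mp h
  rw [sp6_iff]
  refine ⟨?_,?_,?_,?_,?_,?_,?_,?_,?_,?_,?_,?_,?_,?_,?_⟩ <;>
    · simp only [proj_apply, deg_0, deg_1, deg_2, deg_3, deg_4, deg_5]
      norm_num
      split_ifs <;> simp_all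
lemma proj_deg {X : Matrix (Fin 6) (Fin 6) ℝ} (k : ℤ) :
    ∀ i j, ((deg i : ℝ) - deg j) * proj k X i j = (k : ℝ) * proj k X i j := by
  intro i j
  simp only [proj_apply]
  by_cases hc : deg i - deg j = k
  · have : ((deg i : ℝ) - deg j) = (k : ℝ) := by exact_mod_cast hc
    simp [hc, this]
  · simp [hc]

lemma proj_mem_sLevel {X : Matrix (Fin 6) (Fin 6) ℝ} (h : X ∈ sp6) (k : ℤ) :
    proj k X ∈ sLevel k :=
  mem_sLevel_iff.mpr ⟨proj_mem_sp6 h k, proj_deg k⟩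

lemma proj_sum (X : Matrix (Fin 6) (Fin 6) ℝ) :
    X = proj (-2) X + proj (-1) X + proj 0 X + proj 1 X + proj 2 X := by
  ext i j
  have h : deg i - deg j = -2 ∨ deg i - deg j = -1 ∨ deg i - deg j = 0 ∨
      deg i - deg j = 1 ∨ deg i - deg j = 2 := by
    fin_cases i <;> fin_cases j <;> decide
  simp only [Matrix.add_apply, proj_apply]
  rcases h with h|h|h|h|h <;> rw [h] <;> norm_num

lemma decomp_exists : ∀ X ∈ sp6, ∃ a ∈ sLevel (-2), ∃ b ∈ sLevel (-1), ∃ c ∈ sLevel 0,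
    ∃ d ∈ sLevel 1, ∃ e ∈ sLevel 2, X = a + b + c + d + e := by
  intro X hX
  exact ⟨proj (-2) X, proj_mem_sLevel hX _, proj (-1) X, proj_mem_sLevel hX _,
    proj 0 X, proj_mem_sLevel hX _, proj 1 X, proj_mem_sLevel hX _,
    proj 2 X, proj_mem_sLevel hX _, proj_sum X⟩

lemma level_disjoint {a b c d e : Matrix (Fin 6) (Fin 6) ℝ}
    (ha : a ∈ sLevel (-2)) (hb : b ∈ sLevel (-1)) (hc : c ∈ sLevel 0)
    (hd : d ∈ sLevel 1) (he : e ∈ sLevel 2) (h : a + b + c + d + e = 0) :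
    a = 0 ∧ b = 0 ∧ c = 0 ∧ d = 0 ∧ e = 0 := by
  have key : ∀ i j, a i j = 0 ∧ b i j = 0 ∧ c i j = 0 ∧ d i j = 0 ∧ e i j = 0 := by
    intro i j
    have hsum : a i j + b i j + c i j + d i j + e i j = 0 := by
      have := congrFun (congrFun h i) j
      simpa using this
    have hdis : deg i - deg j = -2 ∨ deg i - deg j = -1 ∨ deg i - deg j = 0 ∨
        deg i - deg j = 1 ∨ deg i - deg j = 2 := by
      fin_cases i <;> fin_cases j <;> decide
    rcases hdis with h'|h'|h'|h'|h'
    · have z1 : b i j = 0 := sLevel_entry_zero hb (by omega)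
      have z2 : c i j = 0 := sLevel_entry_zero hc (by omega)
      have z3 : d i j = 0 := sLevel_entry_zero hd (by omega)
      have z4 : e i j = 0 := sLevel_entry_zero he (by omega)
      refine ⟨by linarith, z1, z2, z3, z4⟩
    · have z1 : a i j = 0 := sLevel_entry_zero ha (by omega)
      have z2 : c i j = 0 := sLevel_entry_zero hc (by omega)
      have z3 : d i j = 0 := sLevel_entry_zero hd (by omega)
      have z4 : e i j = 0 := sLevel_entry_zero he (by omega)
      refine ⟨z1, by linarith, z2, z3, z4⟩
    · have z1 : a i j = 0 := sLevel_entry_zero ha (by omega)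
      have z2 : b i j = 0 := sLevel_entry_zero hb (by omega)
      have z3 : d i j = 0 := sLevel_entry_zero hd (by omega)
      have z4 : e i j = 0 := sLevel_entry_zero he (by omega)
      refine ⟨z1, z2, by linarith, z3, z4⟩
    · have z1 : a i j = 0 := sLevel_entry_zero ha (by omega)
      have z2 : b i j = 0 := sLevel_entry_zero hb (by omega)
      have z3 : c i j = 0 := sLevel_entry_zero hc (by omega)
      have z4 : e i j = 0 := sLevel_entry_zero he (by omega)
      refine ⟨z1, z2, z3, by linarith, z4⟩
    · have z1 : a i j = 0 := sLevel_entry_zero ha (by omega)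
      have z2 : b i j = 0 := sLevel_entry_zero hb (by omega)
      have z3 : c i j = 0 := sLevel_entry_zero hc (by omega)
      have z4 : d i j = 0 := sLevel_entry_zero hd (by omega)
      refine ⟨z1, z2, z3, z4, by linarith⟩
  exact ⟨Matrix.ext fun i j => (key i j).1, Matrix.ext fun i j => (key i j).2.1,
    Matrix.ext fun i j => (key i j).2.2.1, Matrix.ext fun i j => (key i j).2.2.2.1,
    Matrix.ext fun i j => (key i j).2.2.2.2⟩

lemma bracket_level {p q : ℤ} {X Y : Matrix (Fin 6) (Fin 6) ℝ}
    (hX : X ∈ sLevel p) (hY : Y ∈ sLevel q) : X * Y - Y * X ∈ sLevel (p + q) := by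
  obtain ⟨hX1, hX2⟩ := hX
  obtain ⟨hY1, hY2⟩ := hY
  constructor
  · -- sp6 closed under bracket
    simp only [sp6, Set.mem_setOf_eq] at hX1 hY1 ⊢
    have hX' : X.transpose * J6 = -(J6 * X) := by
      rw [← add_eq_zero_iff_eq_neg]; exact hX1
    have hY' : Y.transpose * J6 = -(J6 * Y) := by
      rw [← add_eq_zero_iff_eq_neg]; exact hY1
    have e1 : (X * Y).transpose * J6 = J6 * (Y * X) := by
      rw [Matrix.transpose_mul, mul_assoc, hX', mul_neg, ← mul_assoc, hY']
      simp [mul_assoc]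
    have e2 : (Y * X).transpose * J6 = J6 * (X * Y) := by
      rw [Matrix.transpose_mul, mul_assoc, hY', mul_neg, ← mul_assoc, hX']
      simp [mul_assoc]
    rw [Matrix.transpose_sub, Matrix.sub_mul, e1, e2]
    noncomm_ring
  · -- grading
    have h1 : D6 * X = X * D6 + (p : ℝ) • X := by
      rw [← hX2]; noncomm_ring
    have h2 : D6 * Y = Y * D6 + (q : ℝ) • Y := by
      rw [← hY2]; noncomm_ring
    have e1 : D6 * (X * Y) = X * Y * D6 + ((p : ℝ) + q) • (X * Y) := by
      rw [← mul_assoc, h1, add_mul, mul_assoc, h2]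
      rw [mul_add, Matrix.mul_smul, Matrix.smul_mul, add_smul, ← mul_assoc]
      abel
    have e2 : D6 * (Y * X) = Y * X * D6 + ((p : ℝ) + q) • (Y * X) := by
      rw [← mul_assoc, h2, add_mul, mul_assoc, h1]
      rw [mul_add, Matrix.mul_smul, Matrix.smul_mul, add_smul, ← mul_assoc]
      abel
    rw [mul_sub, e1, e2, sub_mul, smul_sub]
    push_cast
    abel
@[simp] lemma fin6_mk0 : (⟨0, by omega⟩ : Fin 6) = 0 := rfl
@[simp] lemma fin6_mk1 : (⟨1, by omega⟩ : Fin 6) = 1 := rfl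
@[simp] lemma fin6_mk2 : (⟨2, by omega⟩ : Fin 6) = 2 := rfl
@[simp] lemma fin6_mk3 : (⟨3, by omega⟩ : Fin 6) = 3 := rfl
@[simp] lemma fin6_mk4 : (⟨4, by omega⟩ : Fin 6) = 4 := rfl
@[simp] lemma fin6_mk5 : (⟨5, by omega⟩ : Fin 6) = 5 := rfl
@[simp] lemma fin3_mk0 : (⟨0, by omega⟩ : Fin 3) = 0 := rfl
@[simp] lemma fin3_mk1 : (⟨1, by omega⟩ : Fin 3) = 1 := rfl
@[simp] lemma fin3_mk2 : (⟨2, by omega⟩ : Fin 3) = 2 := rfl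
@[simp] lemma fin4_mk0 : (⟨0, by omega⟩ : Fin 4) = 0 := rfl
@[simp] lemma fin4_mk1 : (⟨1, by omega⟩ : Fin 4) = 1 := rfl
@[simp] lemma fin4_mk2 : (⟨2, by omega⟩ : Fin 4) = 2 := rfl
@[simp] lemma fin4_mk3 : (⟨3, by omega⟩ : Fin 4) = 3 := rfl
@[simp] lemma fin7_mk0 : (⟨0, by omega⟩ : Fin 7) = 0 := rfl
@[simp] lemma fin7_mk1 : (⟨1, by omega⟩ : Fin 7) = 1 := rfl
@[simp] lemma fin7_mk2 : (⟨2, by omega⟩ : Fin 7) = 2 := rfl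
@[simp] lemma fin7_mk3 : (⟨3, by omega⟩ : Fin 7) = 3 := rfl
@[simp] lemma fin7_mk4 : (⟨4, by omega⟩ : Fin 7) = 4 := rfl
@[simp] lemma fin7_mk5 : (⟨5, by omega⟩ : Fin 7) = 5 := rfl
@[simp] lemma fin7_mk6 : (⟨6, by omega⟩ : Fin 7) = 6 := rfl
@[simp] lemma fin2_mk0 : (⟨0, by omega⟩ : Fin 2) = 0 := rfl
@[simp] lemma fin2_mk1 : (⟨1, by omega⟩ : Fin 2) = 1 := rfl

def mkP2 (v : Fin 3 → ℝ) : Matrix (Fin 6) (Fin 6) ℝ := !![0, 0, 0, v 0, v 1, 0; 0, 0, 0, v 1, v 2, 0; 0, 0, 0, 0, 0, 0; 0, 0, 0, 0, 0, 0; 0, 0, 0, 0, 0, 0; 0, 0, 0, 0, 0, 0]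
@[simp] lemma mkP2_a00 (v : Fin 3 → ℝ) : mkP2 v 0 0 = 0 := rfl
@[simp] lemma mkP2_a01 (v : Fin 3 → ℝ) : mkP2 v 0 1 = 0 := rfl
@[simp] lemma mkP2_a02 (v : Fin 3 → ℝ) : mkP2 v 0 2 = 0 := rfl
@[simp] lemma mkP2_a03 (v : Fin 3 → ℝ) : mkP2 v 0 3 = v 0 := rfl
@[simp] lemma mkP2_a04 (v : Fin 3 → ℝ) : mkP2 v 0 4 = v 1 := rfl
@[simp] lemma mkP2_a05 (v : Fin 3 → ℝ) : mkP2 v 0 5 = 0 := rfl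
@[simp] lemma mkP2_a10 (v : Fin 3 → ℝ) : mkP2 v 1 0 = 0 := rfl
@[simp] lemma mkP2_a11 (v : Fin 3 → ℝ) : mkP2 v 1 1 = 0 := rfl
@[simp] lemma mkP2_a12 (v : Fin 3 → ℝ) : mkP2 v 1 2 = 0 := rfl
@[simp] lemma mkP2_a13 (v : Fin 3 → ℝ) : mkP2 v 1 3 = v 1 := rfl
@[simp] lemma mkP2_a14 (v : Fin 3 → ℝ) : mkP2 v 1 4 = v 2 := rfl
@[simp] lemma mkP2_a15 (v : Fin 3 → ℝ) : mkP2 v 1 5 = 0 := rfl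
@[simp] lemma mkP2_a20 (v : Fin 3 → ℝ) : mkP2 v 2 0 = 0 := rfl
@[simp] lemma mkP2_a21 (v : Fin 3 → ℝ) : mkP2 v 2 1 = 0 := rfl
@[simp] lemma mkP2_a22 (v : Fin 3 → ℝ) : mkP2 v 2 2 = 0 := rfl
@[simp] lemma mkP2_a23 (v : Fin 3 → ℝ) : mkP2 v 2 3 = 0 := rfl
@[simp] lemma mkP2_a24 (v : Fin 3 → ℝ) : mkP2 v 2 4 = 0 := rfl
@[simp] lemma mkP2_a25 (v : Fin 3 → ℝ) : mkP2 v 2 5 = 0 := rfl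
@[simp] lemma mkP2_a30 (v : Fin 3 → ℝ) : mkP2 v 3 0 = 0 := rfl
@[simp] lemma mkP2_a31 (v : Fin 3 → ℝ) : mkP2 v 3 1 = 0 := rfl
@[simp] lemma mkP2_a32 (v : Fin 3 → ℝ) : mkP2 v 3 2 = 0 := rfl
@[simp] lemma mkP2_a33 (v : Fin 3 → ℝ) : mkP2 v 3 3 = 0 := rfl
@[simp] lemma mkP2_a34 (v : Fin 3 → ℝ) : mkP2 v 3 4 = 0 := rfl
@[simp] lemma mkP2_a35 (v : Fin 3 → ℝ) : mkP2 v 3 5 = 0 := rfl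
@[simp] lemma mkP2_a40 (v : Fin 3 → ℝ) : mkP2 v 4 0 = 0 := rfl
@[simp] lemma mkP2_a41 (v : Fin 3 → ℝ) : mkP2 v 4 1 = 0 := rfl
@[simp] lemma mkP2_a42 (v : Fin 3 → ℝ) : mkP2 v 4 2 = 0 := rfl
@[simp] lemma mkP2_a43 (v : Fin 3 → ℝ) : mkP2 v 4 3 = 0 := rfl
@[simp] lemma mkP2_a44 (v : Fin 3 → ℝ) : mkP2 v 4 4 = 0 := rfl
@[simp] lemma mkP2_a45 (v : Fin 3 → ℝ) : mkP2 v 4 5 = 0 := rfl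
@[simp] lemma mkP2_a50 (v : Fin 3 → ℝ) : mkP2 v 5 0 = 0 := rfl
@[simp] lemma mkP2_a51 (v : Fin 3 → ℝ) : mkP2 v 5 1 = 0 := rfl
@[simp] lemma mkP2_a52 (v : Fin 3 → ℝ) : mkP2 v 5 2 = 0 := rfl
@[simp] lemma mkP2_a53 (v : Fin 3 → ℝ) : mkP2 v 5 3 = 0 := rfl
@[simp] lemma mkP2_a54 (v : Fin 3 → ℝ) : mkP2 v 5 4 = 0 := rfl
@[simp] lemma mkP2_a55 (v : Fin 3 → ℝ) : mkP2 v 5 5 = 0 := rfl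
def pP2 (X : Matrix (Fin 6) (Fin 6) ℝ) : Fin 3 → ℝ := ![X 0 3, X 0 4, X 1 4]
@[simp] lemma pP2_0 (X : Matrix (Fin 6) (Fin 6) ℝ) : pP2 X 0 = X 0 3 := rfl
@[simp] lemma pP2_1 (X : Matrix (Fin 6) (Fin 6) ℝ) : pP2 X 1 = X 0 4 := rfl
@[simp] lemma pP2_2 (X : Matrix (Fin 6) (Fin 6) ℝ) : pP2 X 2 = X 1 4 := rfl

lemma mkP2_mem (v : Fin 3 → ℝ) : mkP2 v ∈ sLevel 2 := by
  rw [mem_sLevel_iff, sp6_iff]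
  refine ⟨⟨?_,?_,?_,?_,?_,?_,?_,?_,?_,?_,?_,?_,?_,?_,?_⟩, ?_⟩
  · norm_num
  · norm_num
  · norm_num
  · norm_num
  · norm_num
  · norm_num
  · norm_num
  · norm_num
  · norm_num
  · norm_num
  · norm_num
  · norm_num
  · norm_num
  · norm_num
  · norm_num
  · intro i j
    fin_cases i <;> fin_cases j <;> norm_num

lemma mkP2_p {X : Matrix (Fin 6) (Fin 6) ℝ} (hX : X ∈ sLevel 2) :
    mkP2 (pP2 X) = X := by
  obtain ⟨c1,c2,c3,b1,b2,b3,a1,a2,a3,a4,a5,a6,a7,a8,a9⟩ := sp6_iff.mp hX.1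
  ext i j
  fin_cases i <;> fin_cases j <;>
    simp only [mkP2_a00, mkP2_a01, mkP2_a02, mkP2_a03, mkP2_a04, mkP2_a05, mkP2_a10, mkP2_a11, mkP2_a12, mkP2_a13, mkP2_a14, mkP2_a15, mkP2_a20, mkP2_a21, mkP2_a22, mkP2_a23, mkP2_a24, mkP2_a25, mkP2_a30, mkP2_a31, mkP2_a32, mkP2_a33, mkP2_a34, mkP2_a35, mkP2_a40, mkP2_a41, mkP2_a42, mkP2_a43, mkP2_a44, mkP2_a45, mkP2_a50, mkP2_a51, mkP2_a52, mkP2_a53, mkP2_a54, mkP2_a55, pP2_0, pP2_1, pP2_2, fin6_mk0, fin6_mk1, fin6_mk2, fin6_mk3, fin6_mk4, fin6_mk5] <;>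
    first
      | rfl
      | (exact (sLevel_entry_zero hX (by decide)).symm)
      | linarith

def lP2 : (Fin 3 → ℝ) →ₗ[ℝ] Matrix (Fin 6) (Fin 6) ℝ where
  toFun := mkP2
  map_add' u v := by
    ext i j
    fin_cases i <;> fin_cases j <;>
      simp only [Matrix.add_apply, Pi.add_apply, mkP2_a00, mkP2_a01, mkP2_a02, mkP2_a03, mkP2_a04, mkP2_a05, mkP2_a10, mkP2_a11, mkP2_a12, mkP2_a13, mkP2_a14, mkP2_a15, mkP2_a20, mkP2_a21, mkP2_a22, mkP2_a23, mkP2_a24, mkP2_a25, mkP2_a30, mkP2_a31, mkP2_a32, mkP2_a33, mkP2_a34, mkP2_a35, mkP2_a40, mkP2_a41, mkP2_a42, mkP2_a43, mkP2_a44, mkP2_a45, mkP2_a50, mkP2_a51, mkP2_a52, mkP2_a53, mkP2_a54, mkP2_a55, fin6_mk0, fin6_mk1, fin6_mk2, fin6_mk3, fin6_mk4, fin6_mk5] <;>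
      ring
  map_smul' c v := by
    ext i j
    fin_cases i <;> fin_cases j <;>
      simp only [RingHom.id_apply, Matrix.smul_apply, Pi.smul_apply, smul_eq_mul, mkP2_a00, mkP2_a01, mkP2_a02, mkP2_a03, mkP2_a04, mkP2_a05, mkP2_a10, mkP2_a11, mkP2_a12, mkP2_a13, mkP2_a14, mkP2_a15, mkP2_a20, mkP2_a21, mkP2_a22, mkP2_a23, mkP2_a24, mkP2_a25, mkP2_a30, mkP2_a31, mkP2_a32, mkP2_a33, mkP2_a34, mkP2_a35, mkP2_a40, mkP2_a41, mkP2_a42, mkP2_a43, mkP2_a44, mkP2_a45, mkP2_a50, mkP2_a51, mkP2_a52, mkP2_a53, mkP2_a54, mkP2_a55, fin6_mk0, fin6_mk1, fin6_mk2, fin6_mk3, fin6_mk4, fin6_mk5] <;>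
      ring

def qP2 : Matrix (Fin 6) (Fin 6) ℝ →ₗ[ℝ] (Fin 3 → ℝ) where
  toFun := pP2
  map_add' u v := by funext i; fin_cases i <;> rfl
  map_smul' c v := by funext i; fin_cases i <;> rfl

def mkN2 (v : Fin 3 → ℝ) : Matrix (Fin 6) (Fin 6) ℝ := !![0, 0, 0, 0, 0, 0; 0, 0, 0, 0, 0, 0; 0, 0, 0, 0, 0, 0; v 0, v 1, 0, 0, 0, 0; v 1, v 2, 0, 0, 0, 0; 0, 0, 0, 0, 0, 0]
@[simp] lemma mkN2_a00 (v : Fin 3 → ℝ) : mkN2 v 0 0 = 0 := rfl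
@[simp] lemma mkN2_a01 (v : Fin 3 → ℝ) : mkN2 v 0 1 = 0 := rfl
@[simp] lemma mkN2_a02 (v : Fin 3 → ℝ) : mkN2 v 0 2 = 0 := rfl
@[simp] lemma mkN2_a03 (v : Fin 3 → ℝ) : mkN2 v 0 3 = 0 := rfl
@[simp] lemma mkN2_a04 (v : Fin 3 → ℝ) : mkN2 v 0 4 = 0 := rfl
@[simp] lemma mkN2_a05 (v : Fin 3 → ℝ) : mkN2 v 0 5 = 0 := rfl
@[simp] lemma mkN2_a10 (v : Fin 3 → ℝ) : mkN2 v 1 0 = 0 := rfl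
@[simp] lemma mkN2_a11 (v : Fin 3 → ℝ) : mkN2 v 1 1 = 0 := rfl
@[simp] lemma mkN2_a12 (v : Fin 3 → ℝ) : mkN2 v 1 2 = 0 := rfl
@[simp] lemma mkN2_a13 (v : Fin 3 → ℝ) : mkN2 v 1 3 = 0 := rfl
@[simp] lemma mkN2_a14 (v : Fin 3 → ℝ) : mkN2 v 1 4 = 0 := rfl
@[simp] lemma mkN2_a15 (v : Fin 3 → ℝ) : mkN2 v 1 5 = 0 := rfl
@[simp] lemma mkN2_a20 (v : Fin 3 → ℝ) : mkN2 v 2 0 = 0 := rfl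
@[simp] lemma mkN2_a21 (v : Fin 3 → ℝ) : mkN2 v 2 1 = 0 := rfl
@[simp] lemma mkN2_a22 (v : Fin 3 → ℝ) : mkN2 v 2 2 = 0 := rfl
@[simp] lemma mkN2_a23 (v : Fin 3 → ℝ) : mkN2 v 2 3 = 0 := rfl
@[simp] lemma mkN2_a24 (v : Fin 3 → ℝ) : mkN2 v 2 4 = 0 := rfl
@[simp] lemma mkN2_a25 (v : Fin 3 → ℝ) : mkN2 v 2 5 = 0 := rfl
@[simp] lemma mkN2_a30 (v : Fin 3 → ℝ) : mkN2 v 3 0 = v 0 := rfl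
@[simp] lemma mkN2_a31 (v : Fin 3 → ℝ) : mkN2 v 3 1 = v 1 := rfl
@[simp] lemma mkN2_a32 (v : Fin 3 → ℝ) : mkN2 v 3 2 = 0 := rfl
@[simp] lemma mkN2_a33 (v : Fin 3 → ℝ) : mkN2 v 3 3 = 0 := rfl
@[simp] lemma mkN2_a34 (v : Fin 3 → ℝ) : mkN2 v 3 4 = 0 := rfl
@[simp] lemma mkN2_a35 (v : Fin 3 → ℝ) : mkN2 v 3 5 = 0 := rfl
@[simp] lemma mkN2_a40 (v : Fin 3 → ℝ) : mkN2 v 4 0 = v 1 := rfl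
@[simp] lemma mkN2_a41 (v : Fin 3 → ℝ) : mkN2 v 4 1 = v 2 := rfl
@[simp] lemma mkN2_a42 (v : Fin 3 → ℝ) : mkN2 v 4 2 = 0 := rfl
@[simp] lemma mkN2_a43 (v : Fin 3 → ℝ) : mkN2 v 4 3 = 0 := rfl
@[simp] lemma mkN2_a44 (v : Fin 3 → ℝ) : mkN2 v 4 4 = 0 := rfl
@[simp] lemma mkN2_a45 (v : Fin 3 → ℝ) : mkN2 v 4 5 = 0 := rfl
@[simp] lemma mkN2_a50 (v : Fin 3 → ℝ) : mkN2 v 5 0 = 0 := rfl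
@[simp] lemma mkN2_a51 (v : Fin 3 → ℝ) : mkN2 v 5 1 = 0 := rfl
@[simp] lemma mkN2_a52 (v : Fin 3 → ℝ) : mkN2 v 5 2 = 0 := rfl
@[simp] lemma mkN2_a53 (v : Fin 3 → ℝ) : mkN2 v 5 3 = 0 := rfl
@[simp] lemma mkN2_a54 (v : Fin 3 → ℝ) : mkN2 v 5 4 = 0 := rfl
@[simp] lemma mkN2_a55 (v : Fin 3 → ℝ) : mkN2 v 5 5 = 0 := rfl
def pN2 (X : Matrix (Fin 6) (Fin 6) ℝ) : Fin 3 → ℝ := ![X 3 0, X 4 0, X 4 1]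
@[simp] lemma pN2_0 (X : Matrix (Fin 6) (Fin 6) ℝ) : pN2 X 0 = X 3 0 := rfl
@[simp] lemma pN2_1 (X : Matrix (Fin 6) (Fin 6) ℝ) : pN2 X 1 = X 4 0 := rfl
@[simp] lemma pN2_2 (X : Matrix (Fin 6) (Fin 6) ℝ) : pN2 X 2 = X 4 1 := rfl

lemma mkN2_mem (v : Fin 3 → ℝ) : mkN2 v ∈ sLevel (-2) := by
  rw [mem_sLevel_iff, sp6_iff]
  refine ⟨⟨?_,?_,?_,?_,?_,?_,?_,?_,?_,?_,?_,?_,?_,?_,?_⟩, ?_⟩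
  · norm_num
  · norm_num
  · norm_num
  · norm_num
  · norm_num
  · norm_num
  · norm_num
  · norm_num
  · norm_num
  · norm_num
  · norm_num
  · norm_num
  · norm_num
  · norm_num
  · norm_num
  · intro i j
    fin_cases i <;> fin_cases j <;> norm_num

lemma mkN2_p {X : Matrix (Fin 6) (Fin 6) ℝ} (hX : X ∈ sLevel (-2)) :
    mkN2 (pN2 X) = X := by
  obtain ⟨c1,c2,c3,b1,b2,b3,a1,a2,a3,a4,a5,a6,a7,a8,a9⟩ := sp6_iff.mp hX.1
  ext i j
  fin_cases i <;> fin_cases j <;>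
    simp only [mkN2_a00, mkN2_a01, mkN2_a02, mkN2_a03, mkN2_a04, mkN2_a05, mkN2_a10, mkN2_a11, mkN2_a12, mkN2_a13, mkN2_a14, mkN2_a15, mkN2_a20, mkN2_a21, mkN2_a22, mkN2_a23, mkN2_a24, mkN2_a25, mkN2_a30, mkN2_a31, mkN2_a32, mkN2_a33, mkN2_a34, mkN2_a35, mkN2_a40, mkN2_a41, mkN2_a42, mkN2_a43, mkN2_a44, mkN2_a45, mkN2_a50, mkN2_a51, mkN2_a52, mkN2_a53, mkN2_a54, mkN2_a55, pN2_0, pN2_1, pN2_2, fin6_mk0, fin6_mk1, fin6_mk2, fin6_mk3, fin6_mk4, fin6_mk5] <;>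
    first
      | rfl
      | (exact (sLevel_entry_zero hX (by decide)).symm)
      | linarith

def lN2 : (Fin 3 → ℝ) →ₗ[ℝ] Matrix (Fin 6) (Fin 6) ℝ where
  toFun := mkN2
  map_add' u v := by
    ext i j
    fin_cases i <;> fin_cases j <;>
      simp only [Matrix.add_apply, Pi.add_apply, mkN2_a00, mkN2_a01, mkN2_a02, mkN2_a03, mkN2_a04, mkN2_a05, mkN2_a10, mkN2_a11, mkN2_a12, mkN2_a13, mkN2_a14, mkN2_a15, mkN2_a20, mkN2_a21, mkN2_a22, mkN2_a23, mkN2_a24, mkN2_a25, mkN2_a30, mkN2_a31, mkN2_a32, mkN2_a33, mkN2_a34, mkN2_a35, mkN2_a40, mkN2_a41, mkN2_a42, mkN2_a43, mkN2_a44, mkN2_a45, mkN2_a50, mkN2_a51, mkN2_a52, mkN2_a53, mkN2_a54, mkN2_a55, fin6_mk0, fin6_mk1, fin6_mk2, fin6_mk3, fin6_mk4, fin6_mk5] <;>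
      ring
  map_smul' c v := by
    ext i j
    fin_cases i <;> fin_cases j <;>
      simp only [RingHom.id_apply, Matrix.smul_apply, Pi.smul_apply, smul_eq_mul, mkN2_a00, mkN2_a01, mkN2_a02, mkN2_a03, mkN2_a04, mkN2_a05, mkN2_a10, mkN2_a11, mkN2_a12, mkN2_a13, mkN2_a14, mkN2_a15, mkN2_a20, mkN2_a21, mkN2_a22, mkN2_a23, mkN2_a24, mkN2_a25, mkN2_a30, mkN2_a31, mkN2_a32, mkN2_a33, mkN2_a34, mkN2_a35, mkN2_a40, mkN2_a41, mkN2_a42, mkN2_a43, mkN2_a44, mkN2_a45, mkN2_a50, mkN2_a51, mkN2_a52, mkN2_a53, mkN2_a54, mkN2_a55, fin6_mk0, fin6_mk1, fin6_mk2, fin6_mk3, fin6_mk4, fin6_mk5] <;>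
      ring

def qN2 : Matrix (Fin 6) (Fin 6) ℝ →ₗ[ℝ] (Fin 3 → ℝ) where
  toFun := pN2
  map_add' u v := by funext i; fin_cases i <;> rfl
  map_smul' c v := by funext i; fin_cases i <;> rfl

def mkP1 (v : Fin 4 → ℝ) : Matrix (Fin 6) (Fin 6) ℝ := !![0, 0, v 0, 0, 0, v 2; 0, 0, v 1, 0, 0, v 3; 0, 0, 0, v 2, v 3, 0; 0, 0, 0, 0, 0, 0; 0, 0, 0, 0, 0, 0; 0, 0, 0, -v 0, -v 1, 0]
@[simp] lemma mkP1_a00 (v : Fin 4 → ℝ) : mkP1 v 0 0 = 0 := rfl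
@[simp] lemma mkP1_a01 (v : Fin 4 → ℝ) : mkP1 v 0 1 = 0 := rfl
@[simp] lemma mkP1_a02 (v : Fin 4 → ℝ) : mkP1 v 0 2 = v 0 := rfl
@[simp] lemma mkP1_a03 (v : Fin 4 → ℝ) : mkP1 v 0 3 = 0 := rfl
@[simp] lemma mkP1_a04 (v : Fin 4 → ℝ) : mkP1 v 0 4 = 0 := rfl
@[simp] lemma mkP1_a05 (v : Fin 4 → ℝ) : mkP1 v 0 5 = v 2 := rfl
@[simp] lemma mkP1_a10 (v : Fin 4 → ℝ) : mkP1 v 1 0 = 0 := rfl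
@[simp] lemma mkP1_a11 (v : Fin 4 → ℝ) : mkP1 v 1 1 = 0 := rfl
@[simp] lemma mkP1_a12 (v : Fin 4 → ℝ) : mkP1 v 1 2 = v 1 := rfl
@[simp] lemma mkP1_a13 (v : Fin 4 → ℝ) : mkP1 v 1 3 = 0 := rfl
@[simp] lemma mkP1_a14 (v : Fin 4 → ℝ) : mkP1 v 1 4 = 0 := rfl
@[simp] lemma mkP1_a15 (v : Fin 4 → ℝ) : mkP1 v 1 5 = v 3 := rfl
@[simp] lemma mkP1_a20 (v : Fin 4 → ℝ) : mkP1 v 2 0 = 0 := rfl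
@[simp] lemma mkP1_a21 (v : Fin 4 → ℝ) : mkP1 v 2 1 = 0 := rfl
@[simp] lemma mkP1_a22 (v : Fin 4 → ℝ) : mkP1 v 2 2 = 0 := rfl
@[simp] lemma mkP1_a23 (v : Fin 4 → ℝ) : mkP1 v 2 3 = v 2 := rfl
@[simp] lemma mkP1_a24 (v : Fin 4 → ℝ) : mkP1 v 2 4 = v 3 := rfl
@[simp] lemma mkP1_a25 (v : Fin 4 → ℝ) : mkP1 v 2 5 = 0 := rfl
@[simp] lemma mkP1_a30 (v : Fin 4 → ℝ) : mkP1 v 3 0 = 0 := rfl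
@[simp] lemma mkP1_a31 (v : Fin 4 → ℝ) : mkP1 v 3 1 = 0 := rfl
@[simp] lemma mkP1_a32 (v : Fin 4 → ℝ) : mkP1 v 3 2 = 0 := rfl
@[simp] lemma mkP1_a33 (v : Fin 4 → ℝ) : mkP1 v 3 3 = 0 := rfl
@[simp] lemma mkP1_a34 (v : Fin 4 → ℝ) : mkP1 v 3 4 = 0 := rfl
@[simp] lemma mkP1_a35 (v : Fin 4 → ℝ) : mkP1 v 3 5 = 0 := rfl
@[simp] lemma mkP1_a40 (v : Fin 4 → ℝ) : mkP1 v 4 0 = 0 := rfl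
@[simp] lemma mkP1_a41 (v : Fin 4 → ℝ) : mkP1 v 4 1 = 0 := rfl
@[simp] lemma mkP1_a42 (v : Fin 4 → ℝ) : mkP1 v 4 2 = 0 := rfl
@[simp] lemma mkP1_a43 (v : Fin 4 → ℝ) : mkP1 v 4 3 = 0 := rfl
@[simp] lemma mkP1_a44 (v : Fin 4 → ℝ) : mkP1 v 4 4 = 0 := rfl
@[simp] lemma mkP1_a45 (v : Fin 4 → ℝ) : mkP1 v 4 5 = 0 := rfl
@[simp] lemma mkP1_a50 (v : Fin 4 → ℝ) : mkP1 v 5 0 = 0 := rfl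
@[simp] lemma mkP1_a51 (v : Fin 4 → ℝ) : mkP1 v 5 1 = 0 := rfl
@[simp] lemma mkP1_a52 (v : Fin 4 → ℝ) : mkP1 v 5 2 = 0 := rfl
@[simp] lemma mkP1_a53 (v : Fin 4 → ℝ) : mkP1 v 5 3 = (-v 0) := rfl
@[simp] lemma mkP1_a54 (v : Fin 4 → ℝ) : mkP1 v 5 4 = (-v 1) := rfl
@[simp] lemma mkP1_a55 (v : Fin 4 → ℝ) : mkP1 v 5 5 = 0 := rfl
def pP1 (X : Matrix (Fin 6) (Fin 6) ℝ) : Fin 4 → ℝ := ![X 0 2, X 1 2, X 0 5, X 1 5]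
@[simp] lemma pP1_0 (X : Matrix (Fin 6) (Fin 6) ℝ) : pP1 X 0 = X 0 2 := rfl
@[simp] lemma pP1_1 (X : Matrix (Fin 6) (Fin 6) ℝ) : pP1 X 1 = X 1 2 := rfl
@[simp] lemma pP1_2 (X : Matrix (Fin 6) (Fin 6) ℝ) : pP1 X 2 = X 0 5 := rfl
@[simp] lemma pP1_3 (X : Matrix (Fin 6) (Fin 6) ℝ) : pP1 X 3 = X 1 5 := rfl

lemma mkP1_mem (v : Fin 4 → ℝ) : mkP1 v ∈ sLevel 1 := by
  rw [mem_sLevel_iff, sp6_iff]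
  refine ⟨⟨?_,?_,?_,?_,?_,?_,?_,?_,?_,?_,?_,?_,?_,?_,?_⟩, ?_⟩
  · norm_num
  · norm_num
  · norm_num
  · norm_num
  · norm_num
  · norm_num
  · norm_num
  · norm_num
  · norm_num
  · norm_num
  · norm_num
  · norm_num
  · norm_num
  · norm_num
  · norm_num
  · intro i j
    fin_cases i <;> fin_cases j <;> norm_num

lemma mkP1_p {X : Matrix (Fin 6) (Fin 6) ℝ} (hX : X ∈ sLevel 1) :
    mkP1 (pP1 X) = X := by
  obtain ⟨c1,c2,c3,b1,b2,b3,a1,a2,a3,a4,a5,a6,a7,a8,a9⟩ := sp6_iff.mp hX.1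
  ext i j
  fin_cases i <;> fin_cases j <;>
    simp only [mkP1_a00, mkP1_a01, mkP1_a02, mkP1_a03, mkP1_a04, mkP1_a05, mkP1_a10, mkP1_a11, mkP1_a12, mkP1_a13, mkP1_a14, mkP1_a15, mkP1_a20, mkP1_a21, mkP1_a22, mkP1_a23, mkP1_a24, mkP1_a25, mkP1_a30, mkP1_a31, mkP1_a32, mkP1_a33, mkP1_a34, mkP1_a35, mkP1_a40, mkP1_a41, mkP1_a42, mkP1_a43, mkP1_a44, mkP1_a45, mkP1_a50, mkP1_a51, mkP1_a52, mkP1_a53, mkP1_a54, mkP1_a55, pP1_0, pP1_1, pP1_2, pP1_3, fin6_mk0, fin6_mk1, fin6_mk2, fin6_mk3, fin6_mk4, fin6_mk5] <;>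
    first
      | rfl
      | (exact (sLevel_entry_zero hX (by decide)).symm)
      | linarith

def lP1 : (Fin 4 → ℝ) →ₗ[ℝ] Matrix (Fin 6) (Fin 6) ℝ where
  toFun := mkP1
  map_add' u v := by
    ext i j
    fin_cases i <;> fin_cases j <;>
      simp only [Matrix.add_apply, Pi.add_apply, mkP1_a00, mkP1_a01, mkP1_a02, mkP1_a03, mkP1_a04, mkP1_a05, mkP1_a10, mkP1_a11, mkP1_a12, mkP1_a13, mkP1_a14, mkP1_a15, mkP1_a20, mkP1_a21, mkP1_a22, mkP1_a23, mkP1_a24, mkP1_a25, mkP1_a30, mkP1_a31, mkP1_a32, mkP1_a33, mkP1_a34, mkP1_a35, mkP1_a40, mkP1_a41, mkP1_a42, mkP1_a43, mkP1_a44, mkP1_a45, mkP1_a50, mkP1_a51, mkP1_a52, mkP1_a53, mkP1_a54, mkP1_a55, fin6_mk0, fin6_mk1, fin6_mk2, fin6_mk3, fin6_mk4, fin6_mk5] <;>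
      ring
  map_smul' c v := by
    ext i j
    fin_cases i <;> fin_cases j <;>
      simp only [RingHom.id_apply, Matrix.smul_apply, Pi.smul_apply, smul_eq_mul, mkP1_a00, mkP1_a01, mkP1_a02, mkP1_a03, mkP1_a04, mkP1_a05, mkP1_a10, mkP1_a11, mkP1_a12, mkP1_a13, mkP1_a14, mkP1_a15, mkP1_a20, mkP1_a21, mkP1_a22, mkP1_a23, mkP1_a24, mkP1_a25, mkP1_a30, mkP1_a31, mkP1_a32, mkP1_a33, mkP1_a34, mkP1_a35, mkP1_a40, mkP1_a41, mkP1_a42, mkP1_a43, mkP1_a44, mkP1_a45, mkP1_a50, mkP1_a51, mkP1_a52, mkP1_a53, mkP1_a54, mkP1_a55, fin6_mk0, fin6_mk1, fin6_mk2, fin6_mk3, fin6_mk4, fin6_mk5] <;>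
      ring

def qP1 : Matrix (Fin 6) (Fin 6) ℝ →ₗ[ℝ] (Fin 4 → ℝ) where
  toFun := pP1
  map_add' u v := by funext i; fin_cases i <;> rfl
  map_smul' c v := by funext i; fin_cases i <;> rfl

def mkN1 (v : Fin 4 → ℝ) : Matrix (Fin 6) (Fin 6) ℝ := !![0, 0, 0, 0, 0, 0; 0, 0, 0, 0, 0, 0; v 0, v 1, 0, 0, 0, 0; 0, 0, v 2, 0, 0, -v 0; 0, 0, v 3, 0, 0, -v 1; v 2, v 3, 0, 0, 0, 0]
@[simp] lemma mkN1_a00 (v : Fin 4 → ℝ) : mkN1 v 0 0 = 0 := rfl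
@[simp] lemma mkN1_a01 (v : Fin 4 → ℝ) : mkN1 v 0 1 = 0 := rfl
@[simp] lemma mkN1_a02 (v : Fin 4 → ℝ) : mkN1 v 0 2 = 0 := rfl
@[simp] lemma mkN1_a03 (v : Fin 4 → ℝ) : mkN1 v 0 3 = 0 := rfl
@[simp] lemma mkN1_a04 (v : Fin 4 → ℝ) : mkN1 v 0 4 = 0 := rfl
@[simp] lemma mkN1_a05 (v : Fin 4 → ℝ) : mkN1 v 0 5 = 0 := rfl
@[simp] lemma mkN1_a10 (v : Fin 4 → ℝ) : mkN1 v 1 0 = 0 := rfl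
@[simp] lemma mkN1_a11 (v : Fin 4 → ℝ) : mkN1 v 1 1 = 0 := rfl
@[simp] lemma mkN1_a12 (v : Fin 4 → ℝ) : mkN1 v 1 2 = 0 := rfl
@[simp] lemma mkN1_a13 (v : Fin 4 → ℝ) : mkN1 v 1 3 = 0 := rfl
@[simp] lemma mkN1_a14 (v : Fin 4 → ℝ) : mkN1 v 1 4 = 0 := rfl
@[simp] lemma mkN1_a15 (v : Fin 4 → ℝ) : mkN1 v 1 5 = 0 := rfl
@[simp] lemma mkN1_a20 (v : Fin 4 → ℝ) : mkN1 v 2 0 = v 0 := rfl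
@[simp] lemma mkN1_a21 (v : Fin 4 → ℝ) : mkN1 v 2 1 = v 1 := rfl
@[simp] lemma mkN1_a22 (v : Fin 4 → ℝ) : mkN1 v 2 2 = 0 := rfl
@[simp] lemma mkN1_a23 (v : Fin 4 → ℝ) : mkN1 v 2 3 = 0 := rfl
@[simp] lemma mkN1_a24 (v : Fin 4 → ℝ) : mkN1 v 2 4 = 0 := rfl
@[simp] lemma mkN1_a25 (v : Fin 4 → ℝ) : mkN1 v 2 5 = 0 := rfl
@[simp] lemma mkN1_a30 (v : Fin 4 → ℝ) : mkN1 v 3 0 = 0 := rfl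
@[simp] lemma mkN1_a31 (v : Fin 4 → ℝ) : mkN1 v 3 1 = 0 := rfl
@[simp] lemma mkN1_a32 (v : Fin 4 → ℝ) : mkN1 v 3 2 = v 2 := rfl
@[simp] lemma mkN1_a33 (v : Fin 4 → ℝ) : mkN1 v 3 3 = 0 := rfl
@[simp] lemma mkN1_a34 (v : Fin 4 → ℝ) : mkN1 v 3 4 = 0 := rfl
@[simp] lemma mkN1_a35 (v : Fin 4 → ℝ) : mkN1 v 3 5 = (-v 0) := rfl
@[simp] lemma mkN1_a40 (v : Fin 4 → ℝ) : mkN1 v 4 0 = 0 := rfl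
@[simp] lemma mkN1_a41 (v : Fin 4 → ℝ) : mkN1 v 4 1 = 0 := rfl
@[simp] lemma mkN1_a42 (v : Fin 4 → ℝ) : mkN1 v 4 2 = v 3 := rfl
@[simp] lemma mkN1_a43 (v : Fin 4 → ℝ) : mkN1 v 4 3 = 0 := rfl
@[simp] lemma mkN1_a44 (v : Fin 4 → ℝ) : mkN1 v 4 4 = 0 := rfl
@[simp] lemma mkN1_a45 (v : Fin 4 → ℝ) : mkN1 v 4 5 = (-v 1) := rfl
@[simp] lemma mkN1_a50 (v : Fin 4 → ℝ) : mkN1 v 5 0 = v 2 := rfl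
@[simp] lemma mkN1_a51 (v : Fin 4 → ℝ) : mkN1 v 5 1 = v 3 := rfl
@[simp] lemma mkN1_a52 (v : Fin 4 → ℝ) : mkN1 v 5 2 = 0 := rfl
@[simp] lemma mkN1_a53 (v : Fin 4 → ℝ) : mkN1 v 5 3 = 0 := rfl
@[simp] lemma mkN1_a54 (v : Fin 4 → ℝ) : mkN1 v 5 4 = 0 := rfl
@[simp] lemma mkN1_a55 (v : Fin 4 → ℝ) : mkN1 v 5 5 = 0 := rfl
def pN1 (X : Matrix (Fin 6) (Fin 6) ℝ) : Fin 4 → ℝ := ![X 2 0, X 2 1, X 5 0, X 5 1]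
@[simp] lemma pN1_0 (X : Matrix (Fin 6) (Fin 6) ℝ) : pN1 X 0 = X 2 0 := rfl
@[simp] lemma pN1_1 (X : Matrix (Fin 6) (Fin 6) ℝ) : pN1 X 1 = X 2 1 := rfl
@[simp] lemma pN1_2 (X : Matrix (Fin 6) (Fin 6) ℝ) : pN1 X 2 = X 5 0 := rfl
@[simp] lemma pN1_3 (X : Matrix (Fin 6) (Fin 6) ℝ) : pN1 X 3 = X 5 1 := rfl

lemma mkN1_mem (v : Fin 4 → ℝ) : mkN1 v ∈ sLevel (-1) := by
  rw [mem_sLevel_iff, sp6_iff]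
  refine ⟨⟨?_,?_,?_,?_,?_,?_,?_,?_,?_,?_,?_,?_,?_,?_,?_⟩, ?_⟩
  · norm_num
  · norm_num
  · norm_num
  · norm_num
  · norm_num
  · norm_num
  · norm_num
  · norm_num
  · norm_num
  · norm_num
  · norm_num
  · norm_num
  · norm_num
  · norm_num
  · norm_num
  · intro i j
    fin_cases i <;> fin_cases j <;> norm_num

lemma mkN1_p {X : Matrix (Fin 6) (Fin 6) ℝ} (hX : X ∈ sLevel (-1)) :
    mkN1 (pN1 X) = X := by
  obtain ⟨c1,c2,c3,b1,b2,b3,a1,a2,a3,a4,a5,a6,a7,a8,a9⟩ := sp6_iff.mp hX.1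
  ext i j
  fin_cases i <;> fin_cases j <;>
    simp only [mkN1_a00, mkN1_a01, mkN1_a02, mkN1_a03, mkN1_a04, mkN1_a05, mkN1_a10, mkN1_a11, mkN1_a12, mkN1_a13, mkN1_a14, mkN1_a15, mkN1_a20, mkN1_a21, mkN1_a22, mkN1_a23, mkN1_a24, mkN1_a25, mkN1_a30, mkN1_a31, mkN1_a32, mkN1_a33, mkN1_a34, mkN1_a35, mkN1_a40, mkN1_a41, mkN1_a42, mkN1_a43, mkN1_a44, mkN1_a45, mkN1_a50, mkN1_a51, mkN1_a52, mkN1_a53, mkN1_a54, mkN1_a55, pN1_0, pN1_1, pN1_2, pN1_3, fin6_mk0, fin6_mk1, fin6_mk2, fin6_mk3, fin6_mk4, fin6_mk5] <;>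
    first
      | rfl
      | (exact (sLevel_entry_zero hX (by decide)).symm)
      | linarith

def lN1 : (Fin 4 → ℝ) →ₗ[ℝ] Matrix (Fin 6) (Fin 6) ℝ where
  toFun := mkN1
  map_add' u v := by
    ext i j
    fin_cases i <;> fin_cases j <;>
      simp only [Matrix.add_apply, Pi.add_apply, mkN1_a00, mkN1_a01, mkN1_a02, mkN1_a03, mkN1_a04, mkN1_a05, mkN1_a10, mkN1_a11, mkN1_a12, mkN1_a13, mkN1_a14, mkN1_a15, mkN1_a20, mkN1_a21, mkN1_a22, mkN1_a23, mkN1_a24, mkN1_a25, mkN1_a30, mkN1_a31, mkN1_a32, mkN1_a33, mkN1_a34, mkN1_a35, mkN1_a40, mkN1_a41, mkN1_a42, mkN1_a43, mkN1_a44, mkN1_a45, mkN1_a50, mkN1_a51, mkN1_a52, mkN1_a53, mkN1_a54, mkN1_a55, fin6_mk0, fin6_mk1, fin6_mk2, fin6_mk3, fin6_mk4, fin6_mk5] <;>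
      ring
  map_smul' c v := by
    ext i j
    fin_cases i <;> fin_cases j <;>
      simp only [RingHom.id_apply, Matrix.smul_apply, Pi.smul_apply, smul_eq_mul, mkN1_a00, mkN1_a01, mkN1_a02, mkN1_a03, mkN1_a04, mkN1_a05, mkN1_a10, mkN1_a11, mkN1_a12, mkN1_a13, mkN1_a14, mkN1_a15, mkN1_a20, mkN1_a21, mkN1_a22, mkN1_a23, mkN1_a24, mkN1_a25, mkN1_a30, mkN1_a31, mkN1_a32, mkN1_a33, mkN1_a34, mkN1_a35, mkN1_a40, mkN1_a41, mkN1_a42, mkN1_a43, mkN1_a44, mkN1_a45, mkN1_a50, mkN1_a51, mkN1_a52, mkN1_a53, mkN1_a54, mkN1_a55, fin6_mk0, fin6_mk1, fin6_mk2, fin6_mk3, fin6_mk4, fin6_mk5] <;>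
      ring

def qN1 : Matrix (Fin 6) (Fin 6) ℝ →ₗ[ℝ] (Fin 4 → ℝ) where
  toFun := pN1
  map_add' u v := by funext i; fin_cases i <;> rfl
  map_smul' c v := by funext i; fin_cases i <;> rfl

def mkZ0 (v : Fin 7 → ℝ) : Matrix (Fin 6) (Fin 6) ℝ := !![v 0, v 1, 0, 0, 0, 0; v 2, v 3, 0, 0, 0, 0; 0, 0, v 4, 0, 0, v 5; 0, 0, 0, -v 0, -v 2, 0; 0, 0, 0, -v 1, -v 3, 0; 0, 0, v 6, 0, 0, -v 4]
@[simp] lemma mkZ0_a00 (v : Fin 7 → ℝ) : mkZ0 v 0 0 = v 0 := rfl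
@[simp] lemma mkZ0_a01 (v : Fin 7 → ℝ) : mkZ0 v 0 1 = v 1 := rfl
@[simp] lemma mkZ0_a02 (v : Fin 7 → ℝ) : mkZ0 v 0 2 = 0 := rfl
@[simp] lemma mkZ0_a03 (v : Fin 7 → ℝ) : mkZ0 v 0 3 = 0 := rfl
@[simp] lemma mkZ0_a04 (v : Fin 7 → ℝ) : mkZ0 v 0 4 = 0 := rfl
@[simp] lemma mkZ0_a05 (v : Fin 7 → ℝ) : mkZ0 v 0 5 = 0 := rfl
@[simp] lemma mkZ0_a10 (v : Fin 7 → ℝ) : mkZ0 v 1 0 = v 2 := rfl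
@[simp] lemma mkZ0_a11 (v : Fin 7 → ℝ) : mkZ0 v 1 1 = v 3 := rfl
@[simp] lemma mkZ0_a12 (v : Fin 7 → ℝ) : mkZ0 v 1 2 = 0 := rfl
@[simp] lemma mkZ0_a13 (v : Fin 7 → ℝ) : mkZ0 v 1 3 = 0 := rfl
@[simp] lemma mkZ0_a14 (v : Fin 7 → ℝ) : mkZ0 v 1 4 = 0 := rfl
@[simp] lemma mkZ0_a15 (v : Fin 7 → ℝ) : mkZ0 v 1 5 = 0 := rfl
@[simp] lemma mkZ0_a20 (v : Fin 7 → ℝ) : mkZ0 v 2 0 = 0 := rfl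
@[simp] lemma mkZ0_a21 (v : Fin 7 → ℝ) : mkZ0 v 2 1 = 0 := rfl
@[simp] lemma mkZ0_a22 (v : Fin 7 → ℝ) : mkZ0 v 2 2 = v 4 := rfl
@[simp] lemma mkZ0_a23 (v : Fin 7 → ℝ) : mkZ0 v 2 3 = 0 := rfl
@[simp] lemma mkZ0_a24 (v : Fin 7 → ℝ) : mkZ0 v 2 4 = 0 := rfl
@[simp] lemma mkZ0_a25 (v : Fin 7 → ℝ) : mkZ0 v 2 5 = v 5 := rfl
@[simp] lemma mkZ0_a30 (v : Fin 7 → ℝ) : mkZ0 v 3 0 = 0 := rfl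
@[simp] lemma mkZ0_a31 (v : Fin 7 → ℝ) : mkZ0 v 3 1 = 0 := rfl
@[simp] lemma mkZ0_a32 (v : Fin 7 → ℝ) : mkZ0 v 3 2 = 0 := rfl
@[simp] lemma mkZ0_a33 (v : Fin 7 → ℝ) : mkZ0 v 3 3 = (-v 0) := rfl
@[simp] lemma mkZ0_a34 (v : Fin 7 → ℝ) : mkZ0 v 3 4 = (-v 2) := rfl
@[simp] lemma mkZ0_a35 (v : Fin 7 → ℝ) : mkZ0 v 3 5 = 0 := rfl
@[simp] lemma mkZ0_a40 (v : Fin 7 → ℝ) : mkZ0 v 4 0 = 0 := rfl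
@[simp] lemma mkZ0_a41 (v : Fin 7 → ℝ) : mkZ0 v 4 1 = 0 := rfl
@[simp] lemma mkZ0_a42 (v : Fin 7 → ℝ) : mkZ0 v 4 2 = 0 := rfl
@[simp] lemma mkZ0_a43 (v : Fin 7 → ℝ) : mkZ0 v 4 3 = (-v 1) := rfl
@[simp] lemma mkZ0_a44 (v : Fin 7 → ℝ) : mkZ0 v 4 4 = (-v 3) := rfl
@[simp] lemma mkZ0_a45 (v : Fin 7 → ℝ) : mkZ0 v 4 5 = 0 := rfl
@[simp] lemma mkZ0_a50 (v : Fin 7 → ℝ) : mkZ0 v 5 0 = 0 := rfl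
@[simp] lemma mkZ0_a51 (v : Fin 7 → ℝ) : mkZ0 v 5 1 = 0 := rfl
@[simp] lemma mkZ0_a52 (v : Fin 7 → ℝ) : mkZ0 v 5 2 = v 6 := rfl
@[simp] lemma mkZ0_a53 (v : Fin 7 → ℝ) : mkZ0 v 5 3 = 0 := rfl
@[simp] lemma mkZ0_a54 (v : Fin 7 → ℝ) : mkZ0 v 5 4 = 0 := rfl
@[simp] lemma mkZ0_a55 (v : Fin 7 → ℝ) : mkZ0 v 5 5 = (-v 4) := rfl
def pZ0 (X : Matrix (Fin 6) (Fin 6) ℝ) : Fin 7 → ℝ := ![X 0 0, X 0 1, X 1 0, X 1 1, X 2 2, X 2 5, X 5 2]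
@[simp] lemma pZ0_0 (X : Matrix (Fin 6) (Fin 6) ℝ) : pZ0 X 0 = X 0 0 := rfl
@[simp] lemma pZ0_1 (X : Matrix (Fin 6) (Fin 6) ℝ) : pZ0 X 1 = X 0 1 := rfl
@[simp] lemma pZ0_2 (X : Matrix (Fin 6) (Fin 6) ℝ) : pZ0 X 2 = X 1 0 := rfl
@[simp] lemma pZ0_3 (X : Matrix (Fin 6) (Fin 6) ℝ) : pZ0 X 3 = X 1 1 := rfl
@[simp] lemma pZ0_4 (X : Matrix (Fin 6) (Fin 6) ℝ) : pZ0 X 4 = X 2 2 := rfl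
@[simp] lemma pZ0_5 (X : Matrix (Fin 6) (Fin 6) ℝ) : pZ0 X 5 = X 2 5 := rfl
@[simp] lemma pZ0_6 (X : Matrix (Fin 6) (Fin 6) ℝ) : pZ0 X 6 = X 5 2 := rfl

lemma mkZ0_mem (v : Fin 7 → ℝ) : mkZ0 v ∈ sLevel 0 := by
  rw [mem_sLevel_iff, sp6_iff]
  refine ⟨⟨?_,?_,?_,?_,?_,?_,?_,?_,?_,?_,?_,?_,?_,?_,?_⟩, ?_⟩
  · norm_num
  · norm_num
  · norm_num
  · norm_num
  · norm_num
  · norm_num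
  · norm_num
  · norm_num
  · norm_num
  · norm_num
  · norm_num
  · norm_num
  · norm_num
  · norm_num
  · norm_num
  · intro i j
    fin_cases i <;> fin_cases j <;> norm_num

lemma mkZ0_p {X : Matrix (Fin 6) (Fin 6) ℝ} (hX : X ∈ sLevel 0) :
    mkZ0 (pZ0 X) = X := by
  obtain ⟨c1,c2,c3,b1,b2,b3,a1,a2,a3,a4,a5,a6,a7,a8,a9⟩ := sp6_iff.mp hX.1
  ext i j
  fin_cases i <;> fin_cases j <;>
    simp only [mkZ0_a00, mkZ0_a01, mkZ0_a02, mkZ0_a03, mkZ0_a04, mkZ0_a05, mkZ0_a10, mkZ0_a11, mkZ0_a12, mkZ0_a13, mkZ0_a14, mkZ0_a15, mkZ0_a20, mkZ0_a21, mkZ0_a22, mkZ0_a23, mkZ0_a24, mkZ0_a25, mkZ0_a30, mkZ0_a31, mkZ0_a32, mkZ0_a33, mkZ0_a34, mkZ0_a35, mkZ0_a40, mkZ0_a41, mkZ0_a42, mkZ0_a43, mkZ0_a44, mkZ0_a45, mkZ0_a50, mkZ0_a51, mkZ0_a52, mkZ0_a53, mkZ0_a54, mkZ0_a55, pZ0_0,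 pZ0_1, pZ0_2, pZ0_3, pZ0_4, pZ0_5, pZ0_6, fin6_mk0, fin6_mk1, fin6_mk2, fin6_mk3, fin6_mk4, fin6_mk5] <;>
    first
      | rfl
      | (exact (sLevel_entry_zero hX (by decide)).symm)
      | linarith

def lZ0 : (Fin 7 → ℝ) →ₗ[ℝ] Matrix (Fin 6) (Fin 6) ℝ where
  toFun := mkZ0
  map_add' u v := by
    ext i j
    fin_cases i <;> fin_cases j <;>
      simp only [Matrix.add_apply, Pi.add_apply, mkZ0_a00, mkZ0_a01, mkZ0_a02, mkZ0_a03, mkZ0_a04, mkZ0_a05, mkZ0_a10, mkZ0_a11, mkZ0_a12, mkZ0_a13, mkZ0_a14, mkZ0_a15, mkZ0_a20, mkZ0_a21, mkZ0_a22, mkZ0_a23, mkZ0_a24, mkZ0_a25, mkZ0_a30, mkZ0_a31, mkZ0_a32, mkZ0_a33, mkZ0_a34, mkZ0_a35, mkZ0_a40, mkZ0_a41, mkZ0_a42, mkZ0_a43, mkZ0_a44, mkZ0_a45, mkZ0_a50, mkZ0_a51, mkZ0_a52, mkZ0_a53, mkZ0_a54, mkZ0_a55, fin6_mk0, fin6_mk1,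 fin6_mk2, fin6_mk3, fin6_mk4, fin6_mk5] <;>
      ring
  map_smul' c v := by
    ext i j
    fin_cases i <;> fin_cases j <;>
      simp only [RingHom.id_apply, Matrix.smul_apply, Pi.smul_apply, smul_eq_mul, mkZ0_a00, mkZ0_a01, mkZ0_a02, mkZ0_a03, mkZ0_a04, mkZ0_a05, mkZ0_a10, mkZ0_a11, mkZ0_a12, mkZ0_a13, mkZ0_a14, mkZ0_a15, mkZ0_a20, mkZ0_a21, mkZ0_a22, mkZ0_a23, mkZ0_a24, mkZ0_a25, mkZ0_a30, mkZ0_a31, mkZ0_a32, mkZ0_a33, mkZ0_a34, mkZ0_a35, mkZ0_a40, mkZ0_a41, mkZ0_a42, mkZ0_a43, mkZ0_a44, mkZ0_a45, mkZ0_a50, mkZ0_a51, mkZ0_a52, mkZ0_a53, mkZ0_a54, mkZ0_a55, fin6_mk0, fin6_mk1, fin6_mk2, fin6_mk3, fin6_mk4, fin6_mk5] <;>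
      ring

def qZ0 : Matrix (Fin 6) (Fin 6) ℝ →ₗ[ℝ] (Fin 7 → ℝ) where
  toFun := pZ0
  map_add' u v := by funext i; fin_cases i <;> rfl
  map_smul' c v := by funext i; fin_cases i <;> rfl


def sSub (k : ℤ) : Submodule ℝ (Matrix (Fin 6) (Fin 6) ℝ) where
  carrier := sLevel k
  zero_mem' := by
    constructor
    · show (0 : Matrix (Fin 6) (Fin 6) ℝ).transpose * J6 + J6 * 0 = 0
      simp
    · simp
  add_mem' := by
    rintro X Y ⟨hx1, hx2⟩ ⟨hy1, hy2⟩
    constructor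
    · show (X + Y).transpose * J6 + J6 * (X + Y) = 0
      have : (X + Y).transpose * J6 + J6 * (X + Y)
          = (X.transpose * J6 + J6 * X) + (Y.transpose * J6 + J6 * Y) := by
        rw [Matrix.transpose_add, Matrix.add_mul, Matrix.mul_add]
        abel
      rw [this, hx1, hy1, add_zero]
    · show D6 * (X + Y) - (X + Y) * D6 = _
      have : D6 * (X + Y) - (X + Y) * D6 = (D6 * X - X * D6) + (D6 * Y - Y * D6) := by
        rw [Matrix.mul_add, Matrix.add_mul]; abel
      rw [this, hx2, hy2, ← smul_add]
  smul_mem' := by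
    rintro c X ⟨hx1, hx2⟩
    constructor
    · show (c • X).transpose * J6 + J6 * (c • X) = 0
      rw [Matrix.transpose_smul, Matrix.smul_mul, Matrix.mul_smul, ← smul_add, hx1, smul_zero]
    · show D6 * (c • X) - (c • X) * D6 = _
      rw [Matrix.mul_smul, Matrix.smul_mul, ← smul_sub, hx2, smul_comm]

lemma sSub_coe (k : ℤ) : ((sSub k : Submodule ℝ (Matrix (Fin 6) (Fin 6) ℝ)) : Set _) = sLevel k := rfl


def eqvP2 : ↥(sSub 2) ≃ₗ[ℝ] (Fin 3 → ℝ) :=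
  LinearEquiv.ofLinear ((qP2).domRestrict (sSub 2))
    ((lP2).codRestrict (sSub 2) (fun v => mkP2_mem v))
    (by refine LinearMap.ext fun v => ?_; funext i; fin_cases i <;> rfl)
    (by refine LinearMap.ext fun X => Subtype.ext ?_; exact mkP2_p X.2)

lemma dimP2 : finrank ℝ ↥(sSub 2) = 3 := by
  rw [eqvP2.finrank_eq]
  simp [Module.finrank_fin_fun]


def eqvN2 : ↥(sSub (-2)) ≃ₗ[ℝ] (Fin 3 → ℝ) :=
  LinearEquiv.ofLinear ((qN2).domRestrict (sSub (-2)))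
    ((lN2).codRestrict (sSub (-2)) (fun v => mkN2_mem v))
    (by refine LinearMap.ext fun v => ?_; funext i; fin_cases i <;> rfl)
    (by refine LinearMap.ext fun X => Subtype.ext ?_; exact mkN2_p X.2)

lemma dimN2 : finrank ℝ ↥(sSub (-2)) = 3 := by
  rw [eqvN2.finrank_eq]
  simp [Module.finrank_fin_fun]


def eqvP1 : ↥(sSub 1) ≃ₗ[ℝ] (Fin 4 → ℝ) :=
  LinearEquiv.ofLinear ((qP1).domRestrict (sSub 1))
    ((lP1).codRestrict (sSub 1) (fun v => mkP1_mem v))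
    (by refine LinearMap.ext fun v => ?_; funext i; fin_cases i <;> rfl)
    (by refine LinearMap.ext fun X => Subtype.ext ?_; exact mkP1_p X.2)

lemma dimP1 : finrank ℝ ↥(sSub 1) = 4 := by
  rw [eqvP1.finrank_eq]
  simp [Module.finrank_fin_fun]


def eqvN1 : ↥(sSub (-1)) ≃ₗ[ℝ] (Fin 4 → ℝ) :=
  LinearEquiv.ofLinear ((qN1).domRestrict (sSub (-1)))
    ((lN1).codRestrict (sSub (-1)) (fun v => mkN1_mem v))
    (by refine LinearMap.ext fun v => ?_; funext i; fin_cases i <;> rfl)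
    (by refine LinearMap.ext fun X => Subtype.ext ?_; exact mkN1_p X.2)

lemma dimN1 : finrank ℝ ↥(sSub (-1)) = 4 := by
  rw [eqvN1.finrank_eq]
  simp [Module.finrank_fin_fun]


def eqvZ0 : ↥(sSub 0) ≃ₗ[ℝ] (Fin 7 → ℝ) :=
  LinearEquiv.ofLinear ((qZ0).domRestrict (sSub 0))
    ((lZ0).codRestrict (sSub 0) (fun v => mkZ0_mem v))
    (by refine LinearMap.ext fun v => ?_; funext i; fin_cases i <;> rfl)
    (by refine LinearMap.ext fun X => Subtype.ext ?_; exact mkZ0_p X.2)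

lemma dimZ0 : finrank ℝ ↥(sSub 0) = 7 := by
  rw [eqvZ0.finrank_eq]
  simp [Module.finrank_fin_fun]


def mkPsi (P : Matrix (Fin 2) (Fin 2) ℝ × Matrix (Fin 2) (Fin 2) ℝ) :
    Matrix (Fin 6) (Fin 6) ℝ := !![P.1 0 0, P.1 0 1, 0, 0, 0, 0; P.1 1 0, P.1 1 1, 0, 0, 0, 0; 0, 0, P.2 0 0, 0, 0, P.2 0 1; 0, 0, 0, -P.1 0 0, -P.1 1 0, 0; 0, 0, 0, -P.1 0 1, -P.1 1 1, 0; 0, 0, P.2 1 0, 0, 0, P.2 1 1]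

@[simp] lemma mkPsi_a00 (P : Matrix (Fin 2) (Fin 2) ℝ × Matrix (Fin 2) (Fin 2) ℝ) : mkPsi P 0 0 = P.1 0 0 := rfl
@[simp] lemma mkPsi_a01 (P : Matrix (Fin 2) (Fin 2) ℝ × Matrix (Fin 2) (Fin 2) ℝ) : mkPsi P 0 1 = P.1 0 1 := rfl
@[simp] lemma mkPsi_a02 (P : Matrix (Fin 2) (Fin 2) ℝ × Matrix (Fin 2) (Fin 2) ℝ) : mkPsi P 0 2 = 0 := rfl
@[simp] lemma mkPsi_a03 (P : Matrix (Fin 2) (Fin 2) ℝ × Matrix (Fin 2) (Fin 2) ℝ) : mkPsi P 0 3 = 0 := rfl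
@[simp] lemma mkPsi_a04 (P : Matrix (Fin 2) (Fin 2) ℝ × Matrix (Fin 2) (Fin 2) ℝ) : mkPsi P 0 4 = 0 := rfl
@[simp] lemma mkPsi_a05 (P : Matrix (Fin 2) (Fin 2) ℝ × Matrix (Fin 2) (Fin 2) ℝ) : mkPsi P 0 5 = 0 := rfl
@[simp] lemma mkPsi_a10 (P : Matrix (Fin 2) (Fin 2) ℝ × Matrix (Fin 2) (Fin 2) ℝ) : mkPsi P 1 0 = P.1 1 0 := rfl
@[simp] lemma mkPsi_a11 (P : Matrix (Fin 2) (Fin 2) ℝ × Matrix (Fin 2) (Fin 2) ℝ) : mkPsi P 1 1 = P.1 1 1 := rfl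
@[simp] lemma mkPsi_a12 (P : Matrix (Fin 2) (Fin 2) ℝ × Matrix (Fin 2) (Fin 2) ℝ) : mkPsi P 1 2 = 0 := rfl
@[simp] lemma mkPsi_a13 (P : Matrix (Fin 2) (Fin 2) ℝ × Matrix (Fin 2) (Fin 2) ℝ) : mkPsi P 1 3 = 0 := rfl
@[simp] lemma mkPsi_a14 (P : Matrix (Fin 2) (Fin 2) ℝ × Matrix (Fin 2) (Fin 2) ℝ) : mkPsi P 1 4 = 0 := rfl
@[simp] lemma mkPsi_a15 (P : Matrix (Fin 2) (Fin 2) ℝ × Matrix (Fin 2) (Fin 2) ℝ) : mkPsi P 1 5 = 0 := rfl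
@[simp] lemma mkPsi_a20 (P : Matrix (Fin 2) (Fin 2) ℝ × Matrix (Fin 2) (Fin 2) ℝ) : mkPsi P 2 0 = 0 := rfl
@[simp] lemma mkPsi_a21 (P : Matrix (Fin 2) (Fin 2) ℝ × Matrix (Fin 2) (Fin 2) ℝ) : mkPsi P 2 1 = 0 := rfl
@[simp] lemma mkPsi_a22 (P : Matrix (Fin 2) (Fin 2) ℝ × Matrix (Fin 2) (Fin 2) ℝ) : mkPsi P 2 2 = P.2 0 0 := rfl
@[simp] lemma mkPsi_a23 (P : Matrix (Fin 2) (Fin 2) ℝ × Matrix (Fin 2) (Fin 2) ℝ) : mkPsi P 2 3 = 0 := rfl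
@[simp] lemma mkPsi_a24 (P : Matrix (Fin 2) (Fin 2) ℝ × Matrix (Fin 2) (Fin 2) ℝ) : mkPsi P 2 4 = 0 := rfl
@[simp] lemma mkPsi_a25 (P : Matrix (Fin 2) (Fin 2) ℝ × Matrix (Fin 2) (Fin 2) ℝ) : mkPsi P 2 5 = P.2 0 1 := rfl
@[simp] lemma mkPsi_a30 (P : Matrix (Fin 2) (Fin 2) ℝ × Matrix (Fin 2) (Fin 2) ℝ) : mkPsi P 3 0 = 0 := rfl
@[simp] lemma mkPsi_a31 (P : Matrix (Fin 2) (Fin 2) ℝ × Matrix (Fin 2) (Fin 2) ℝ) : mkPsi P 3 1 = 0 := rfl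
@[simp] lemma mkPsi_a32 (P : Matrix (Fin 2) (Fin 2) ℝ × Matrix (Fin 2) (Fin 2) ℝ) : mkPsi P 3 2 = 0 := rfl
@[simp] lemma mkPsi_a33 (P : Matrix (Fin 2) (Fin 2) ℝ × Matrix (Fin 2) (Fin 2) ℝ) : mkPsi P 3 3 = (-P.1 0 0) := rfl
@[simp] lemma mkPsi_a34 (P : Matrix (Fin 2) (Fin 2) ℝ × Matrix (Fin 2) (Fin 2) ℝ) : mkPsi P 3 4 = (-P.1 1 0) := rfl
@[simp] lemma mkPsi_a35 (P : Matrix (Fin 2) (Fin 2) ℝ × Matrix (Fin 2) (Fin 2) ℝ) : mkPsi P 3 5 = 0 := rfl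
@[simp] lemma mkPsi_a40 (P : Matrix (Fin 2) (Fin 2) ℝ × Matrix (Fin 2) (Fin 2) ℝ) : mkPsi P 4 0 = 0 := rfl
@[simp] lemma mkPsi_a41 (P : Matrix (Fin 2) (Fin 2) ℝ × Matrix (Fin 2) (Fin 2) ℝ) : mkPsi P 4 1 = 0 := rfl
@[simp] lemma mkPsi_a42 (P : Matrix (Fin 2) (Fin 2) ℝ × Matrix (Fin 2) (Fin 2) ℝ) : mkPsi P 4 2 = 0 := rfl
@[simp] lemma mkPsi_a43 (P : Matrix (Fin 2) (Fin 2) ℝ × Matrix (Fin 2) (Fin 2) ℝ) : mkPsi P 4 3 = (-P.1 0 1) := rfl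
@[simp] lemma mkPsi_a44 (P : Matrix (Fin 2) (Fin 2) ℝ × Matrix (Fin 2) (Fin 2) ℝ) : mkPsi P 4 4 = (-P.1 1 1) := rfl
@[simp] lemma mkPsi_a45 (P : Matrix (Fin 2) (Fin 2) ℝ × Matrix (Fin 2) (Fin 2) ℝ) : mkPsi P 4 5 = 0 := rfl
@[simp] lemma mkPsi_a50 (P : Matrix (Fin 2) (Fin 2) ℝ × Matrix (Fin 2) (Fin 2) ℝ) : mkPsi P 5 0 = 0 := rfl
@[simp] lemma mkPsi_a51 (P : Matrix (Fin 2) (Fin 2) ℝ × Matrix (Fin 2) (Fin 2) ℝ) : mkPsi P 5 1 = 0 := rfl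
@[simp] lemma mkPsi_a52 (P : Matrix (Fin 2) (Fin 2) ℝ × Matrix (Fin 2) (Fin 2) ℝ) : mkPsi P 5 2 = P.2 1 0 := rfl
@[simp] lemma mkPsi_a53 (P : Matrix (Fin 2) (Fin 2) ℝ × Matrix (Fin 2) (Fin 2) ℝ) : mkPsi P 5 3 = 0 := rfl
@[simp] lemma mkPsi_a54 (P : Matrix (Fin 2) (Fin 2) ℝ × Matrix (Fin 2) (Fin 2) ℝ) : mkPsi P 5 4 = 0 := rfl
@[simp] lemma mkPsi_a55 (P : Matrix (Fin 2) (Fin 2) ℝ × Matrix (Fin 2) (Fin 2) ℝ) : mkPsi P 5 5 = P.2 1 1 := rfl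

def lPsi : (Matrix (Fin 2) (Fin 2) ℝ × Matrix (Fin 2) (Fin 2) ℝ) →ₗ[ℝ]
    Matrix (Fin 6) (Fin 6) ℝ where
  toFun := mkPsi
  map_add' u v := by
    ext i j
    fin_cases i <;> fin_cases j <;>
      simp only [Matrix.add_apply, Prod.fst_add, Prod.snd_add, mkPsi_a00, mkPsi_a01, mkPsi_a02, mkPsi_a03, mkPsi_a04, mkPsi_a05, mkPsi_a10, mkPsi_a11, mkPsi_a12, mkPsi_a13, mkPsi_a14, mkPsi_a15, mkPsi_a20, mkPsi_a21, mkPsi_a22, mkPsi_a23, mkPsi_a24, mkPsi_a25, mkPsi_a30, mkPsi_a31, mkPsi_a32, mkPsi_a33, mkPsi_a34, mkPsi_a35, mkPsi_a40, mkPsi_a41, mkPsi_a42, mkPsi_a43, mkPsi_a44, mkPsi_a45, mkPsi_a50, mkPsi_a51, mkPsi_a52, mkPsi_a53, mkPsi_a54, mkPsi_a55,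
        fin6_mk0, fin6_mk1, fin6_mk2, fin6_mk3, fin6_mk4, fin6_mk5] <;>
      ring
  map_smul' c v := by
    ext i j
    fin_cases i <;> fin_cases j <;>
      simp only [RingHom.id_apply, Matrix.smul_apply, Prod.smul_fst, Prod.smul_snd,
        smul_eq_mul, mkPsi_a00, mkPsi_a01, mkPsi_a02, mkPsi_a03, mkPsi_a04, mkPsi_a05, mkPsi_a10, mkPsi_a11, mkPsi_a12, mkPsi_a13, mkPsi_a14, mkPsi_a15, mkPsi_a20, mkPsi_a21, mkPsi_a22, mkPsi_a23, mkPsi_a24, mkPsi_a25, mkPsi_a30, mkPsi_a31, mkPsi_a32, mkPsi_a33, mkPsi_a34, mkPsi_a35, mkPsi_a40, mkPsi_a41, mkPsi_a42, mkPsi_a43, mkPsi_a44, mkPsi_a45, mkPsi_a50, mkPsi_a51, mkPsi_a52, mkPsi_a53, mkPsi_a54, mkPsi_a55, fin6_mk0, fin6_mk1, fin6_mk2, fin6_mk3, fin6_mk4, fin6_mk5] <;>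
      ring

@[simp] lemma lPsi_apply (P) : lPsi P = mkPsi P := rfl

lemma mkPsi_mem {P : Matrix (Fin 2) (Fin 2) ℝ × Matrix (Fin 2) (Fin 2) ℝ}
    (hP : P ∈ gl2sl2) : mkPsi P ∈ sLevel 0 := by
  have ht : P.2 0 0 + P.2 1 1 = 0 := by
    have := hP
    simp only [gl2sl2, Set.mem_setOf_eq, Matrix.trace_fin_two] at this
    exact this
  rw [mem_sLevel_iff, sp6_iff]
  refine ⟨⟨?_,?_,?_,?_,?_,?_,?_,?_,?_,?_,?_,?_,?_,?_,?_⟩, ?_⟩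
  · norm_num
  · norm_num
  · norm_num
  · norm_num
  · norm_num
  · norm_num
  · norm_num
  · norm_num
  · norm_num
  · norm_num
  · norm_num
  · norm_num
  · norm_num
  · norm_num
  · simp only [mkPsi_a55, mkPsi_a22]
    linarith
  · intro i j
    fin_cases i <;> fin_cases j <;> norm_num

def pr1 (X : Matrix (Fin 6) (Fin 6) ℝ) : Matrix (Fin 2) (Fin 2) ℝ :=
  !![X 0 0, X 0 1; X 1 0, X 1 1]
def pr2 (X : Matrix (Fin 6) (Fin 6) ℝ) : Matrix (Fin 2) (Fin 2) ℝ :=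
  !![X 2 2, X 2 5; X 5 2, X 5 5]
@[simp] lemma pr1_00 (X : Matrix (Fin 6) (Fin 6) ℝ) : pr1 X 0 0 = X 0 0 := rfl
@[simp] lemma pr1_01 (X : Matrix (Fin 6) (Fin 6) ℝ) : pr1 X 0 1 = X 0 1 := rfl
@[simp] lemma pr1_10 (X : Matrix (Fin 6) (Fin 6) ℝ) : pr1 X 1 0 = X 1 0 := rfl
@[simp] lemma pr1_11 (X : Matrix (Fin 6) (Fin 6) ℝ) : pr1 X 1 1 = X 1 1 := rfl
@[simp] lemma pr2_00 (X : Matrix (Fin 6) (Fin 6) ℝ) : pr2 X 0 0 = X 2 2 := rfl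
@[simp] lemma pr2_01 (X : Matrix (Fin 6) (Fin 6) ℝ) : pr2 X 0 1 = X 2 5 := rfl
@[simp] lemma pr2_10 (X : Matrix (Fin 6) (Fin 6) ℝ) : pr2 X 1 0 = X 5 2 := rfl
@[simp] lemma pr2_11 (X : Matrix (Fin 6) (Fin 6) ℝ) : pr2 X 1 1 = X 5 5 := rfl

lemma mkPsi_surj {X : Matrix (Fin 6) (Fin 6) ℝ} (hX : X ∈ sLevel 0) :
    ∃ P ∈ gl2sl2, mkPsi P = X := by
  obtain ⟨c1,c2,c3,b1,b2,b3,a1,a2,a3,a4,a5,a6,a7,a8,a9⟩ := sp6_iff.mp hX.1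
  refine ⟨(pr1 X, pr2 X), ?_, ?_⟩
  · simp only [gl2sl2, Set.mem_setOf_eq, Matrix.trace_fin_two, pr2_00, pr2_11]
    linarith
  · ext i j
    fin_cases i <;> fin_cases j <;>
      simp only [mkPsi_a00, mkPsi_a01, mkPsi_a02, mkPsi_a03, mkPsi_a04, mkPsi_a05, mkPsi_a10, mkPsi_a11, mkPsi_a12, mkPsi_a13, mkPsi_a14, mkPsi_a15, mkPsi_a20, mkPsi_a21, mkPsi_a22, mkPsi_a23, mkPsi_a24, mkPsi_a25, mkPsi_a30, mkPsi_a31, mkPsi_a32, mkPsi_a33, mkPsi_a34, mkPsi_a35, mkPsi_a40, mkPsi_a41, mkPsi_a42, mkPsi_a43, mkPsi_a44, mkPsi_a45, mkPsi_a50, mkPsi_a51, mkPsi_a52, mkPsi_a53, mkPsi_a54, mkPsi_a55, fin6_mk0, fin6_mk1, fin6_mk2, fin6_mk3, fin6_mk4, fin6_mk5,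
        pr1_00, pr1_01, pr1_10, pr1_11, pr2_00, pr2_01, pr2_10, pr2_11] <;>
      first
        | rfl
        | (exact (sLevel_entry_zero hX (by decide)).symm)
        | linarith

lemma mkPsi_inj : Function.Injective mkPsi := by
  intro P Q h
  have e := fun a b => congrFun (congrFun h a) b
  refine Prod.ext ?_ ?_
  · ext i j
    fin_cases i <;> fin_cases j
    · simpa using e 0 0
    · simpa using e 0 1
    · simpa using e 1 0
    · simpa using e 1 1
  · ext i j
    fin_cases i <;> fin_cases j
    · simpa using e 2 2
    · simpa using e 2 5
    · simpa using e 5 2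
    · simpa using e 5 5

lemma mkPsi_bracket (p q : Matrix (Fin 2) (Fin 2) ℝ × Matrix (Fin 2) (Fin 2) ℝ) :
    mkPsi (p.1 * q.1 - q.1 * p.1, p.2 * q.2 - q.2 * p.2)
      = mkPsi p * mkPsi q - mkPsi q * mkPsi p := by
  ext i j
  fin_cases i <;> fin_cases j <;>
    simp only [mkPsi_a00, mkPsi_a01, mkPsi_a02, mkPsi_a03, mkPsi_a04, mkPsi_a05, mkPsi_a10, mkPsi_a11, mkPsi_a12, mkPsi_a13, mkPsi_a14, mkPsi_a15, mkPsi_a20, mkPsi_a21, mkPsi_a22, mkPsi_a23, mkPsi_a24, mkPsi_a25, mkPsi_a30, mkPsi_a31, mkPsi_a32, mkPsi_a33, mkPsi_a34, mkPsi_a35, mkPsi_a40, mkPsi_a41, mkPsi_a42, mkPsi_a43, mkPsi_a44, mkPsi_a45, mkPsi_a50, mkPsi_a51, mkPsi_a52, mkPsi_a53, mkPsi_a54, mkPsi_a55, fin6_mk0, fin6_mk1, fin6_mk2, fin6_mk3, fin6_mk4, fin6_mk5,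
      Matrix.sub_apply, Matrix.mul_apply, Fin.sum_univ_six, Fin.sum_univ_two] <;>
    ring


/-- The grading `sp(6,ℝ) = s₋₂ ⊕ s₋₁ ⊕ s₀ ⊕ s₁ ⊕ s₂` induced by `D`, with dimensions
`(3,4,7,4,3)`, and the Lie algebra isomorphism `s₀ ≅ gl(2,ℝ) × sl(2,ℝ)`. -/
theorem sp6_grading_and_zero_part :
    -- every element of sp(6,ℝ) decomposes into graded components
    (∀ X ∈ sp6, ∃ a ∈ sLevel (-2), ∃ b ∈ sLevel (-1), ∃ c ∈ sLevel 0,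
      ∃ d ∈ sLevel 1, ∃ e ∈ sLevel 2, X = a + b + c + d + e) ∧
    -- the decomposition is direct (unique)
    (∀ a ∈ sLevel (-2), ∀ b ∈ sLevel (-1), ∀ c ∈ sLevel 0, ∀ d ∈ sLevel 1,
      ∀ e ∈ sLevel 2, a + b + c + d + e = 0 →
      a = 0 ∧ b = 0 ∧ c = 0 ∧ d = 0 ∧ e = 0) ∧
    -- dimensions of the graded pieces
    (∃ S : Submodule ℝ (Matrix (Fin 6) (Fin 6) ℝ),
      (S : Set _) = sLevel (-2) ∧ finrank ℝ ↥S = 3) ∧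
    (∃ S : Submodule ℝ (Matrix (Fin 6) (Fin 6) ℝ),
      (S : Set _) = sLevel (-1) ∧ finrank ℝ ↥S = 4) ∧
    (∃ S : Submodule ℝ (Matrix (Fin 6) (Fin 6) ℝ),
      (S : Set _) = sLevel 0 ∧ finrank ℝ ↥S = 7) ∧
    (∃ S : Submodule ℝ (Matrix (Fin 6) (Fin 6) ℝ),
      (S : Set _) = sLevel 1 ∧ finrank ℝ ↥S = 4) ∧
    (∃ S : Submodule ℝ (Matrix (Fin 6) (Fin 6) ℝ),
      (S : Set _) = sLevel 2 ∧ finrank ℝ ↥S = 3) ∧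
    -- the bracket respects the grading: [s_p, s_q] ⊆ s_{p+q}
    (∀ p q : ℤ, ∀ X ∈ sLevel p, ∀ Y ∈ sLevel q, X * Y - Y * X ∈ sLevel (p + q)) ∧
    -- s₀ is isomorphic as a Lie algebra to gl(2,ℝ) × sl(2,ℝ)
    (∃ ψ : Matrix (Fin 2) (Fin 2) ℝ × Matrix (Fin 2) (Fin 2) ℝ →ₗ[ℝ]
        Matrix (Fin 6) (Fin 6) ℝ,
      Set.InjOn ψ gl2sl2 ∧ ψ '' gl2sl2 = sLevel 0 ∧
      ∀ p ∈ gl2sl2, ∀ q ∈ gl2sl2,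
        ψ (p.1 * q.1 - q.1 * p.1, p.2 * q.2 - q.2 * p.2) = ψ p * ψ q - ψ q * ψ p) := by
  refine ⟨decomp_exists,
    fun a ha b hb c hc d hd e he h => level_disjoint ha hb hc hd he h,
    ⟨sSub (-2), sSub_coe _, dimN2⟩,
    ⟨sSub (-1), sSub_coe _, dimN1⟩,
    ⟨sSub 0, sSub_coe _, dimZ0⟩,
    ⟨sSub 1, sSub_coe _, dimP1⟩,
    ⟨sSub 2, sSub_coe _, dimP2⟩,
    fun p q X hX Y hY => bracket_level hX hY,
    lPsi, ?_, ?_, ?_⟩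
  · intro P _ Q _ h
    exact mkPsi_inj h
  · apply Set.eq_of_subset_of_subset
    · rintro _ ⟨P, hP, rfl⟩
      exact mkPsi_mem hP
    · intro X hX
      obtain ⟨P, hP, hPX⟩ := mkPsi_surj hX
      exact ⟨P, hP, hPX⟩
  · intro p _ q _
    exact mkPsi_bracket p q
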